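/- Let α, δ ∈ ℝ, β > 0, and let λ ≥ 0 satisfy λ = 0 if α² + 3βδ > 0 and λ > 2√(−(α² + 3βδ))/(3β) if α² + 3βδ ≤ 0. Set c₋ := (α − √(3β²λ² + α² + 3βδ))/(3β) and s(m) := √(3(m − α/(3β))² − (α² + 3βδ)/(3β²)) for m ≤ c₋. Then there exists a constant C > 0, depending only on α, β, δ, λ, such that for every measurable f : (0, ∞) → ℂ with ∫₀^∞ |f(x)|² dx < ∞, one has ∫_{−∞}^{c₋} |∫₀^∞ e^{−x·s(m)} f(x) dx|² dm ≤ C ∫₀^∞ |f(x)|² dx. -/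

import Mathlib

/-!
For `t > 0`, Cauchy–Schwarz with the weight `√x` bounds `|∫₀^∞ e^{-xt} f(x) dx|²` by
`(∫₀^∞ e^{-xt}/√x dx) · ∫₀^∞ e^{-xt} √x |f(x)|² dx`, and the first factor is `√(π/t)`.
Integrating in `m` and exchanging the integrals reduces the theorem to the bound
`∫_{m<c₋} e^{-x s(m)} / √(s(m)) dm ≲ 1/√x`, which follows from `s(m) ≥ √3 (c₋ - m)`
and the monotonicity of `t ↦ e^{-xt}/√t`: after this comparison the integral is again the
Gamma integral `∫₀^∞ e^{-bv}/√v dv = √(π/b)`.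
-/

open MeasureTheory

/-- `c₋ = (α − √(3β²λ² + α² + 3βδ))/(3β)`. -/
noncomputable def cMinus (α β δ lam : ℝ) : ℝ :=
  (α - Real.sqrt (3 * β ^ 2 * lam ^ 2 + α ^ 2 + 3 * β * δ)) / (3 * β)

/-- `s(m) = √(3(m − α/(3β))² − (α² + 3βδ)/(3β²))`. -/
noncomputable def sHNLS (α β δ : ℝ) (m : ℝ) : ℝ :=
  Real.sqrt (3 * (m - α / (3 * β)) ^ 2 - (α ^ 2 + 3 * β * δ) / (3 * β ^ 2))

open Set Real
open scoped ENNReal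

theorem lintegral_exp_neg_mul_div_sqrt {b : ℝ} (hb : 0 < b) :
    ∫⁻ x in Ioi 0, ENNReal.ofReal (exp (-(b * x)) / √x) = ENNReal.ofReal (√π / √b) := by
  have hform : EqOn (fun x : ℝ => x ^ (-(1 / 2) : ℝ) * exp (-b * x ^ (1 : ℝ)))
      (fun x => exp (-(b * x)) / √x) (Ioi 0) := fun x hx => by
    simp only [Real.rpow_one, neg_mul, Real.rpow_neg (le_of_lt hx), ← Real.sqrt_eq_rpow]
    ring
  have hint := (integrableOn_rpow_mul_exp_neg_mul_rpow (by norm_num) one_pos hb).congr_fun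
    hform measurableSet_Ioi
  rw [← ofReal_integral_eq_lintegral_ofReal hint,
    ← setIntegral_congr_fun measurableSet_Ioi hform,
    integral_rpow_mul_exp_neg_mul_rpow one_pos (by norm_num) hb]
  · congr 1
    norm_num [Real.Gamma_one_half_eq, Real.rpow_neg hb.le, ← Real.sqrt_eq_rpow]
    ring
  · filter_upwards [ae_restrict_mem measurableSet_Ioi] with x hx
    exact div_nonneg (exp_pos _).le (Real.sqrt_nonneg _)

theorem setLIntegral_Iio_comp_sub_left (c : ℝ) (g : ℝ → ℝ≥0∞) :
    ∫⁻ m in Iio c, g (c - m) = ∫⁻ v in Ioi 0, g v := by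
  have hpre : (fun m => c - m) ⁻¹' Ioi 0 = Iio c := by ext; simp
  rw [← hpre]
  exact (Measure.measurePreserving_sub_left volume c).setLIntegral_comp_preimage_emb
    (Homeomorph.subLeft c).measurableEmbedding g (Ioi 0)

theorem lintegral_mul_sq_le_mul_lintegral_sq {α : Type*} [MeasurableSpace α] {μ : Measure α}
    {f g : α → ℝ≥0∞} (hf : AEMeasurable f μ) (hg : AEMeasurable g μ) :
    (∫⁻ a, f a * g a ∂μ) ^ 2 ≤ (∫⁻ a, f a ^ 2 ∂μ) * ∫⁻ a, g a ^ 2 ∂μ := by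
  have h := ENNReal.lintegral_mul_le_Lp_mul_Lq μ Real.HolderConjugate.two_two hf hg
  simp only [Pi.mul_apply, ENNReal.rpow_two] at h
  calc (∫⁻ a, f a * g a ∂μ) ^ 2
      ≤ ((∫⁻ a, f a ^ 2 ∂μ) ^ (1 / 2 : ℝ) * (∫⁻ a, g a ^ 2 ∂μ) ^ (1 / 2 : ℝ)) ^ 2 := by
        gcongr
    _ = (∫⁻ a, f a ^ 2 ∂μ) * ∫⁻ a, g a ^ 2 ∂μ := by
      rw [mul_pow, ← ENNReal.rpow_two, ← ENNReal.rpow_two, ← ENNReal.rpow_mul,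
        ← ENNReal.rpow_mul]
      norm_num

theorem ofReal_sq_norm_integral_mul_le_of_weight {α : Type*} [MeasurableSpace α] {μ : Measure α}
    {k w : α → ℝ} {f : α → ℂ} (hk : AEMeasurable k μ) (hw : AEMeasurable w μ)
    (hf : AEMeasurable f μ) (hk0 : ∀ᵐ a ∂μ, 0 ≤ k a) (hw0 : ∀ᵐ a ∂μ, 0 < w a) :
    ENNReal.ofReal (‖∫ a, (k a : ℂ) * f a ∂μ‖ ^ 2) ≤
      (∫⁻ a, ENNReal.ofReal (k a / w a) ∂μ) *
        ∫⁻ a, ENNReal.ofReal (k a * w a * ‖f a‖ ^ 2) ∂μ := by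
  have hsplit : ∀ᵐ a ∂μ, ‖(k a : ℂ) * f a‖ₑ =
      ENNReal.ofReal √(k a / w a) * ENNReal.ofReal (√(k a * w a) * ‖f a‖) := by
    filter_upwards [hk0, hw0] with a hka hwa
    have hkk : k a / w a * (k a * w a) = k a * k a := by field_simp
    rw [← ENNReal.ofReal_mul (Real.sqrt_nonneg _), ← mul_assoc,
      ← Real.sqrt_mul' _ (by positivity), hkk, Real.sqrt_mul_self hka, ← ofReal_norm, norm_mul,
      Complex.norm_real, Real.norm_of_nonneg hka]
  have hsq : ∀ {x : ℝ}, 0 ≤ x → ENNReal.ofReal √x ^ 2 = ENNReal.ofReal x := fun hx => by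
    rw [← ENNReal.ofReal_pow (Real.sqrt_nonneg _), Real.sq_sqrt hx]
  calc ENNReal.ofReal (‖∫ a, (k a : ℂ) * f a ∂μ‖ ^ 2)
      = ‖∫ a, (k a : ℂ) * f a ∂μ‖ₑ ^ 2 := by rw [ENNReal.ofReal_pow (norm_nonneg _), ofReal_norm]
    _ ≤ (∫⁻ a, ‖(k a : ℂ) * f a‖ₑ ∂μ) ^ 2 := by
      gcongr; exact enorm_integral_le_lintegral_enorm _
    _ = (∫⁻ a, ENNReal.ofReal √(k a / w a) * ENNReal.ofReal (√(k a * w a) * ‖f a‖) ∂μ) ^ 2 := by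
      rw [lintegral_congr_ae hsplit]
    _ ≤ _ := lintegral_mul_sq_le_mul_lintegral_sq (by fun_prop) (by fun_prop)
    _ = _ := by
      congr 1 <;> refine lintegral_congr_ae ?_
      · filter_upwards [hk0, hw0] with a hka hwa
        exact hsq (by positivity)
      · filter_upwards [hk0, hw0] with a hka hwa
        rw [← ENNReal.ofReal_pow (by positivity), mul_pow, Real.sq_sqrt (by positivity)]

theorem exp_neg_mul_div_sqrt_antitoneOn {x : ℝ} (hx : 0 ≤ x) :
    AntitoneOn (fun t => exp (-(x * t)) / √t) (Ioi 0) := fun t ht u _ htu =>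
  div_le_div₀ (exp_pos _).le (exp_le_exp.2 (by nlinarith)) (Real.sqrt_pos.2 ht)
    (Real.sqrt_le_sqrt htu)

theorem setLIntegral_Iio_exp_neg_mul_div_sqrt_le {κ c x : ℝ} {s : ℝ → ℝ} (hκ : 0 < κ)
    (hx : 0 < x) (hs : ∀ m < c, κ * (c - m) ≤ s m) :
    ∫⁻ m in Iio c, ENNReal.ofReal (exp (-(x * s m)) / √(s m)) ≤
      ENNReal.ofReal (√π / κ / √x) := by
  have hpt : ∀ m ∈ Iio c, ENNReal.ofReal (exp (-(x * s m)) / √(s m)) ≤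
      ENNReal.ofReal (√κ)⁻¹ * ENNReal.ofReal (exp (-(κ * x * (c - m))) / √(c - m)) := by
    intro m hm
    have hκcm : 0 < κ * (c - m) := mul_pos hκ (sub_pos.2 hm)
    rw [← ENNReal.ofReal_mul (by positivity)]
    refine ENNReal.ofReal_le_ofReal ?_
    calc exp (-(x * s m)) / √(s m) ≤ exp (-(x * (κ * (c - m)))) / √(κ * (c - m)) :=
          exp_neg_mul_div_sqrt_antitoneOn hx.le hκcm (hκcm.trans_le (hs m hm)) (hs m hm)
      _ = (√κ)⁻¹ * (exp (-(κ * x * (c - m))) / √(c - m)) := by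
        rw [Real.sqrt_mul hκ.le]; field_simp
  calc ∫⁻ m in Iio c, ENNReal.ofReal (exp (-(x * s m)) / √(s m))
      ≤ ∫⁻ m in Iio c,
          ENNReal.ofReal (√κ)⁻¹ * ENNReal.ofReal (exp (-(κ * x * (c - m))) / √(c - m)) :=
        setLIntegral_mono_ae (by fun_prop) (ae_of_all _ hpt)
    _ = ENNReal.ofReal (√κ)⁻¹ * ENNReal.ofReal (√π / √(κ * x)) := by
      rw [lintegral_const_mul' _ _ ENNReal.ofReal_ne_top,
        setLIntegral_Iio_comp_sub_left c fun v => ENNReal.ofReal (exp (-(κ * x * v)) / √v),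
        lintegral_exp_neg_mul_div_sqrt (by positivity)]
    _ = ENNReal.ofReal (√π / κ / √x) := by
      rw [← ENNReal.ofReal_mul (by positivity), Real.sqrt_mul hκ.le]
      congr 1
      field_simp
      rw [Real.sq_sqrt hκ.le]

theorem ofReal_sq_norm_laplace_le {t : ℝ} (ht : 0 < t) {f : ℝ → ℂ} (hf : Measurable f) :
    ENNReal.ofReal (‖∫ x in Ioi 0, (exp (-(x * t)) : ℂ) * f x‖ ^ 2) ≤
      ENNReal.ofReal (√π / √t) *
        ∫⁻ x in Ioi 0, ENNReal.ofReal (exp (-(x * t)) * √x * ‖f x‖ ^ 2) := by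
  have hk0 : ∀ᵐ x ∂volume.restrict (Ioi 0), 0 ≤ exp (-(x * t)) :=
    ae_of_all _ fun _ => (exp_pos _).le
  have hw0 : ∀ᵐ x ∂volume.restrict (Ioi (0 : ℝ)), 0 < √x :=
    (ae_restrict_mem measurableSet_Ioi).mono fun x hx => Real.sqrt_pos.2 hx
  refine (ofReal_sq_norm_integral_mul_le_of_weight (by fun_prop) (by fun_prop) hf.aemeasurable
    hk0 hw0).trans_eq ?_
  simp_rw [mul_comm _ t, lintegral_exp_neg_mul_div_sqrt ht]

theorem lintegral_sq_norm_laplace_le {Ω : Type*} [MeasurableSpace Ω] {ν : Measure Ω}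
    [SFinite ν] {s : Ω → ℝ} (hs : Measurable s) (hs0 : ∀ᵐ m ∂ν, 0 < s m) {M : ℝ}
    (hM : ∀ x > 0,
      ∫⁻ m, ENNReal.ofReal (exp (-(x * s m)) / √(s m)) ∂ν ≤ ENNReal.ofReal (M / √x))
    {f : ℝ → ℂ} (hf : Measurable f) :
    ∫⁻ m, ENNReal.ofReal (‖∫ x in Ioi 0, (exp (-(x * s m)) : ℂ) * f x‖ ^ 2) ∂ν ≤
      ENNReal.ofReal (√π * M) * ∫⁻ x in Ioi 0, ENNReal.ofReal (‖f x‖ ^ 2) := by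
  have hsplit : ∀ m x, 0 < s m → ENNReal.ofReal (√π / √(s m)) *
      ENNReal.ofReal (exp (-(x * s m)) * √x * ‖f x‖ ^ 2) =
        ENNReal.ofReal (√π * √x * ‖f x‖ ^ 2) * ENNReal.ofReal (exp (-(x * s m)) / √(s m)) := by
    intro m x hm
    rw [← ENNReal.ofReal_mul (by positivity), ← ENNReal.ofReal_mul (by positivity)]
    congr 1
    ring
  calc ∫⁻ m, ENNReal.ofReal (‖∫ x in Ioi 0, (exp (-(x * s m)) : ℂ) * f x‖ ^ 2) ∂ν
      ≤ ∫⁻ m, (∫⁻ x in Ioi 0, ENNReal.ofReal (√π * √x * ‖f x‖ ^ 2) *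
          ENNReal.ofReal (exp (-(x * s m)) / √(s m))) ∂ν := by
        refine lintegral_mono_ae (hs0.mono fun m hm => ?_)
        refine (ofReal_sq_norm_laplace_le hm hf).trans_eq ?_
        simp_rw [← lintegral_const_mul' _ _ ENNReal.ofReal_ne_top, hsplit m _ hm]
    _ = ∫⁻ x in Ioi 0, ENNReal.ofReal (√π * √x * ‖f x‖ ^ 2) *
          ∫⁻ m, ENNReal.ofReal (exp (-(x * s m)) / √(s m)) ∂ν := by
        rw [lintegral_lintegral_swap (by fun_prop)]
        exact lintegral_congr fun x => lintegral_const_mul' _ _ ENNReal.ofReal_ne_top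
    _ ≤ ∫⁻ x in Ioi 0, ENNReal.ofReal (√π * √x * ‖f x‖ ^ 2) * ENNReal.ofReal (M / √x) :=
        setLIntegral_mono_ae (by fun_prop) (ae_of_all _ fun x hx => by gcongr; exact hM x hx)
    _ = ∫⁻ x in Ioi 0, ENNReal.ofReal (√π * M) * ENNReal.ofReal (‖f x‖ ^ 2) := by
        refine setLIntegral_congr_fun measurableSet_Ioi fun x (hx : 0 < x) => ?_
        rw [mul_comm (ENNReal.ofReal (√π * M)), ← ENNReal.ofReal_mul (by positivity),
          ← ENNReal.ofReal_mul (by positivity)]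
        congr 1
        field_simp [(Real.sqrt_pos.2 hx).ne']
    _ = _ := lintegral_const_mul' _ _ ENNReal.ofReal_ne_top

theorem sqrt_three_mul_sub_le_sHNLS {α β δ lam m : ℝ} (hβ : 0 < β)
    (hm : m ≤ cMinus α β δ lam) : √3 * (cMinus α β δ lam - m) ≤ sHNLS α β δ m := by
  set a := α / (3 * β)
  set B := (α ^ 2 + 3 * β * δ) / (3 * β ^ 2)
  set r := √(3 * β ^ 2 * lam ^ 2 + α ^ 2 + 3 * β * δ) / (3 * β)
  have hc : cMinus α β δ lam = a - r := sub_div _ _ _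
  have hr : 0 ≤ r := by positivity
  -- also when the radicand of `r` is negative and `√` returns `0`
  have hB : B ≤ 3 * r ^ 2 := by
    have hsq := Real.sq_sqrt' (x := 3 * β ^ 2 * lam ^ 2 + α ^ 2 + 3 * β * δ)
    have hmax := le_max_left (3 * β ^ 2 * lam ^ 2 + α ^ 2 + 3 * β * δ) 0
    simp only [B, r, div_pow]
    rw [div_le_iff₀ (by positivity)]
    field_simp
    nlinarith [sq_nonneg (β * lam)]
  rw [hc] at hm ⊢
  refine Real.le_sqrt_of_sq_le ?_
  rw [mul_pow, Real.sq_sqrt zero_le_three]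
  nlinarith [mul_nonneg hr (sub_nonneg.2 hm)]

theorem modified_laplace_L2_bound_ii_general (α β δ : ℝ) (hβ : 0 < β) (lam : ℝ) :
    ∃ C > 0, ∀ f : ℝ → ℂ, Measurable f →
      (∫⁻ x in Set.Ioi (0 : ℝ), ENNReal.ofReal (‖f x‖ ^ 2) < ⊤) →
      (∫⁻ m in Set.Iio (cMinus α β δ lam),
          ENNReal.ofReal
            (‖∫ x in Set.Ioi (0 : ℝ),
                ((Real.exp (-(x * sHNLS α β δ m)) : ℝ) : ℂ) * f x‖ ^ 2)) ≤
        ENNReal.ofReal C *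
          ∫⁻ x in Set.Ioi (0 : ℝ), ENNReal.ofReal (‖f x‖ ^ 2) := by
  set c := cMinus α β δ lam
  have hs : ∀ m < c, √3 * (c - m) ≤ sHNLS α β δ m := fun m hm =>
    sqrt_three_mul_sub_le_sHNLS hβ hm.le
  have hs0 : ∀ᵐ m ∂volume.restrict (Iio c), 0 < sHNLS α β δ m :=
    (ae_restrict_mem measurableSet_Iio).mono fun m hm =>
      (mul_pos (by positivity) (sub_pos.2 hm)).trans_le (hs m hm)
  refine ⟨π / √3, by positivity, fun f hf _ => ?_⟩
  have hbound := lintegral_sq_norm_laplace_le (by unfold sHNLS; fun_prop) hs0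
    (fun x hx => setLIntegral_Iio_exp_neg_mul_div_sqrt_le (by positivity) hx hs) hf
  rwa [← mul_div_assoc, Real.mul_self_sqrt pi_pos.le] at hbound

/-- Modified Laplace transform bound, part (ii):
`∫_{−∞}^{c₋} |∫₀^∞ e^{−x·s(m)} f(x) dx|² dm ≲ ∫₀^∞ |f(x)|² dx`. -/
theorem modified_laplace_L2_bound_ii (α β δ : ℝ) (hβ : 0 < β) (lam : ℝ)
    (hlam0 : 0 ≤ lam)
    (hlam1 : 0 < α ^ 2 + 3 * β * δ → lam = 0)
    (hlam2 : α ^ 2 + 3 * β * δ ≤ 0 →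
      2 * Real.sqrt (-(α ^ 2 + 3 * β * δ)) / (3 * β) < lam) :
    ∃ C > 0, ∀ f : ℝ → ℂ, Measurable f →
      (∫⁻ x in Set.Ioi (0 : ℝ), ENNReal.ofReal (‖f x‖ ^ 2) < ⊤) →
      (∫⁻ m in Set.Iio (cMinus α β δ lam),
          ENNReal.ofReal
            (‖∫ x in Set.Ioi (0 : ℝ),
                ((Real.exp (-(x * sHNLS α β δ m)) : ℝ) : ℂ) * f x‖ ^ 2)) ≤
        ENNReal.ofReal C *
          ∫⁻ x in Set.Ioi (0 : ℝ), ENNReal.ofReal (‖f x‖ ^ 2) :=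
  modified_laplace_L2_bound_ii_general α β δ hβ lam
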